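/- Let 0 < L < d₃. Define h on the interval I = [(d₃ − L)/2, (d₃ + L)/2] by h(d₁) = √(1 − (2d₁ − d₃)²/L²) / d₁³. Then h attains its global maximum on I at the unique point d₁* = (5 d₃ − √(d₃² + 24 L²)) / 8; moreover, the interior critical points of h are exactly the roots of 8 d₁² − 10 d₃ d₁ + 3(d₃² − L²) = 0 lying in the open interval, and d₁* is the only such root, while the other root (5 d₃ + √(d₃² + 24 L²))/8 lies outside I. -/

import Mathlib

/-!
`h` vanishes at both ends of `I` and is positive inside, so its maximum over the compact
interval is attained at an interior critical point. Clearing the positive factor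
`L² √(1 − (2x − d₃)²/L²) x⁴` from `h'` leaves the quadratic `8x² − 10d₃x + 3(d₃² − L²)`, whose
discriminant is `4(d₃² + 24L²)`; of its two roots only the smaller one lies in `I`.
-/

open Real Set

/-- The paper's `z(d₁) / (H_e d₁³)`, with `x = d₁`. -/
noncomputable def linearGain (d₃ L x : ℝ) : ℝ :=
  √(1 - (2 * x - d₃) ^ 2 / L ^ 2) / x ^ 3

theorem setOf_isMaxOn_Icc_eq_singleton {f : ℝ → ℝ} {a b c : ℝ} (hf : ContinuousOn f (Icc a b))
    (hc : c ∈ Icc a b) (ha : f a < f c) (hb : f b < f c)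
    (hcrit : ∀ x ∈ Ioo a b, deriv f x = 0 → x = c) :
    {x ∈ Icc a b | ∀ y ∈ Icc a b, f y ≤ f x} = {c} := by
  have hsub : {x ∈ Icc a b | ∀ y ∈ Icc a b, f y ≤ f x} ⊆ {c} := by
    rintro x ⟨hx, hmax⟩
    have hxc := hmax c hc
    have hxa : a < x := lt_of_le_of_ne hx.1 fun h => by subst h; linarith
    have hxb : x < b := lt_of_le_of_ne hx.2 fun h => by subst h; linarith
    exact hcrit x ⟨hxa, hxb⟩
      (IsLocalMax.deriv_eq_zero (Filter.eventually_of_mem (Icc_mem_nhds hxa hxb) hmax))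
  obtain ⟨m, hm, hmax⟩ := isCompact_Icc.exists_isMaxOn ⟨c, hc⟩ hf
  have hmS : m ∈ {x ∈ Icc a b | ∀ y ∈ Icc a b, f y ≤ f x} := ⟨hm, fun y hy => hmax hy⟩
  obtain rfl : m = c := hsub hmS
  exact hsub.antisymm (singleton_subset_iff.mpr hmS)

section Placement

variable {d₃ L : ℝ}

theorem placement_quadratic_eq_zero_iff (x : ℝ) :
    8 * x ^ 2 - 10 * d₃ * x + 3 * (d₃ ^ 2 - L ^ 2) = 0 ↔
      x = (5 * d₃ + √(d₃ ^ 2 + 24 * L ^ 2)) / 8 ∨ x = (5 * d₃ - √(d₃ ^ 2 + 24 * L ^ 2)) / 8 := by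
  have hs := mul_self_sqrt (by positivity : 0 ≤ d₃ ^ 2 + 24 * L ^ 2)
  have hdiscrim : discrim 8 (-10 * d₃) (3 * (d₃ ^ 2 - L ^ 2)) =
      (2 * √(d₃ ^ 2 + 24 * L ^ 2)) * (2 * √(d₃ ^ 2 + 24 * L ^ 2)) := by
    rw [discrim]; linear_combination (-4) * hs
  convert quadratic_eq_zero_iff (by norm_num) hdiscrim x using 2 <;> ring_nf

theorem mem_Ioo_iff_sq_lt (hL : 0 < L) (x : ℝ) :
    x ∈ Ioo ((d₃ - L) / 2) ((d₃ + L) / 2) ↔ (2 * x - d₃) ^ 2 < L ^ 2 := by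
  rw [sq_lt_sq, abs_of_pos hL, abs_lt, mem_Ioo]
  constructor <;> rintro ⟨h₁, h₂⟩ <;> constructor <;> linarith

theorem placement_root_sub_mem_Ioo (hL : 0 < L) (hLd : L < d₃) :
    (5 * d₃ - √(d₃ ^ 2 + 24 * L ^ 2)) / 8 ∈ Ioo ((d₃ - L) / 2) ((d₃ + L) / 2) := by
  have hs := sq_sqrt (by positivity : 0 ≤ d₃ ^ 2 + 24 * L ^ 2)
  have hs₀ := sqrt_nonneg (d₃ ^ 2 + 24 * L ^ 2)
  constructor <;> nlinarith

theorem lt_placement_root_add (hL : 0 < L) (hLd : L < d₃) :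
    (d₃ + L) / 2 < (5 * d₃ + √(d₃ ^ 2 + 24 * L ^ 2)) / 8 := by
  have hs := sq_sqrt (by positivity : 0 ≤ d₃ ^ 2 + 24 * L ^ 2)
  have hs₀ := sqrt_nonneg (d₃ ^ 2 + 24 * L ^ 2)
  nlinarith

theorem linearGain_eq_zero_of_sq_eq {x : ℝ} (hL : L ≠ 0) (hx : (2 * x - d₃) ^ 2 = L ^ 2) :
    linearGain d₃ L x = 0 := by
  rw [linearGain, hx, div_self (pow_ne_zero 2 hL), sub_self, sqrt_zero, zero_div]

theorem linearGain_pos {x : ℝ} (hx : 0 < x) (hL : 0 < L) (hxL : (2 * x - d₃) ^ 2 < L ^ 2) :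
    0 < linearGain d₃ L x :=
  div_pos (sqrt_pos.mpr (sub_pos.mpr ((div_lt_one (by positivity)).mpr hxL))) (by positivity)

theorem continuousOn_linearGain : ContinuousOn (linearGain d₃ L) (Ioi 0) :=
  ContinuousOn.div (by fun_prop) (by fun_prop) fun x hx => pow_ne_zero 3 (ne_of_gt hx)

theorem hasDerivAt_linearGain {x : ℝ} (hx : 0 < x) (hL : 0 < L)
    (hxL : (2 * x - d₃) ^ 2 < L ^ 2) :
    HasDerivAt (linearGain d₃ L)
      ((8 * x ^ 2 - 10 * d₃ * x + 3 * (d₃ ^ 2 - L ^ 2)) /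
        (L ^ 2 * √(1 - (2 * x - d₃) ^ 2 / L ^ 2) * x ^ 4)) x := by
  have hu : 0 < 1 - (2 * x - d₃) ^ 2 / L ^ 2 := sub_pos.mpr ((div_lt_one (by positivity)).mpr hxL)
  have hinner : HasDerivAt (fun y => 1 - (2 * y - d₃) ^ 2 / L ^ 2)
      (-(2 * (2 * x - d₃) * 2 / L ^ 2)) x := by
    have := ((((hasDerivAt_id x).const_mul 2).sub_const d₃).fun_pow 2).div_const (L ^ 2)
    simpa using this.const_sub 1
  refine ((hinner.sqrt hu.ne').fun_div (hasDerivAt_pow 3 x) (pow_ne_zero 3 hx.ne')).congr_deriv ?_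
  have ht : L ^ 2 * √(1 - (2 * x - d₃) ^ 2 / L ^ 2) ^ 2 = L ^ 2 - (2 * x - d₃) ^ 2 := by
    rw [sq_sqrt hu.le]; field_simp
  have ht₀ : √(1 - (2 * x - d₃) ^ 2 / L ^ 2) ≠ 0 := (sqrt_pos.mpr hu).ne'
  generalize √(1 - (2 * x - d₃) ^ 2 / L ^ 2) = t at ht ht₀ ⊢
  field_simp
  norm_num
  linear_combination (-3 * x ^ 2) * ht

theorem deriv_linearGain_eq_zero_iff {x : ℝ} (hx : 0 < x) (hL : 0 < L)
    (hxL : (2 * x - d₃) ^ 2 < L ^ 2) :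
    deriv (linearGain d₃ L) x = 0 ↔ 8 * x ^ 2 - 10 * d₃ * x + 3 * (d₃ ^ 2 - L ^ 2) = 0 := by
  have : 0 < L ^ 2 * √(1 - (2 * x - d₃) ^ 2 / L ^ 2) * x ^ 4 := by
    have := sqrt_pos.mpr (sub_pos.mpr ((div_lt_one (by positivity)).mpr hxL))
    positivity
  rw [(hasDerivAt_linearGain hx hL hxL).deriv, div_eq_zero_iff, or_iff_left this.ne']

end Placement

theorem optimal_placement_linear (d₃ L : ℝ) (hL : 0 < L) (hLd : L < d₃)
    (h : ℝ → ℝ)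
    (hh : ∀ x, h x = Real.sqrt (1 - (2 * x - d₃) ^ 2 / L ^ 2) / x ^ 3) :
    ({x ∈ Set.Icc ((d₃ - L) / 2) ((d₃ + L) / 2) |
        ∀ y ∈ Set.Icc ((d₃ - L) / 2) ((d₃ + L) / 2), h y ≤ h x} =
      {(5 * d₃ - Real.sqrt (d₃ ^ 2 + 24 * L ^ 2)) / 8}) ∧
    ({x ∈ Set.Ioo ((d₃ - L) / 2) ((d₃ + L) / 2) | deriv h x = 0} =
      {x ∈ Set.Ioo ((d₃ - L) / 2) ((d₃ + L) / 2) |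
        8 * x ^ 2 - 10 * d₃ * x + 3 * (d₃ ^ 2 - L ^ 2) = 0}) ∧
    ({x ∈ Set.Ioo ((d₃ - L) / 2) ((d₃ + L) / 2) |
        8 * x ^ 2 - 10 * d₃ * x + 3 * (d₃ ^ 2 - L ^ 2) = 0} =
      {(5 * d₃ - Real.sqrt (d₃ ^ 2 + 24 * L ^ 2)) / 8}) ∧
    (5 * d₃ + Real.sqrt (d₃ ^ 2 + 24 * L ^ 2)) / 8 ∉
      Set.Icc ((d₃ - L) / 2) ((d₃ + L) / 2) := by
  obtain rfl : h = linearGain d₃ L := funext hh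
  have hpos : 0 < (d₃ - L) / 2 := by linarith
  have hstar := placement_root_sub_mem_Ioo hL hLd
  have hcrit : ∀ x ∈ Ioo ((d₃ - L) / 2) ((d₃ + L) / 2), deriv (linearGain d₃ L) x = 0 ↔
      8 * x ^ 2 - 10 * d₃ * x + 3 * (d₃ ^ 2 - L ^ 2) = 0 := fun x hx =>
    deriv_linearGain_eq_zero_iff (hpos.trans hx.1) hL ((mem_Ioo_iff_sq_lt hL x).mp hx)
  have hroots : {x ∈ Ioo ((d₃ - L) / 2) ((d₃ + L) / 2) |
      8 * x ^ 2 - 10 * d₃ * x + 3 * (d₃ ^ 2 - L ^ 2) = 0} =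
        {(5 * d₃ - √(d₃ ^ 2 + 24 * L ^ 2)) / 8} := by
    refine eq_singleton_iff_unique_mem.mpr ⟨⟨hstar, ?_⟩, ?_⟩
    · exact (placement_quadratic_eq_zero_iff _).mpr (Or.inr rfl)
    · rintro x ⟨hx, hQ⟩
      refine ((placement_quadratic_eq_zero_iff x).mp hQ).resolve_left ?_
      rintro rfl
      exact (lt_placement_root_add hL hLd).not_gt hx.2
  refine ⟨?_, sep_ext_iff.mpr hcrit, hroots, fun hx => (lt_placement_root_add hL hLd).not_ge hx.2⟩
  have hmax_pos : 0 < linearGain d₃ L ((5 * d₃ - √(d₃ ^ 2 + 24 * L ^ 2)) / 8) :=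
    linearGain_pos (hpos.trans hstar.1) hL ((mem_Ioo_iff_sq_lt hL _).mp hstar)
  refine setOf_isMaxOn_Icc_eq_singleton
    (continuousOn_linearGain.mono fun x hx => hpos.trans_le hx.1) (Ioo_subset_Icc_self hstar)
    ?_ ?_ fun x hx hx' => mem_singleton_iff.mp (hroots.subset ⟨hx, (hcrit x hx).mp hx'⟩)
  · rwa [linearGain_eq_zero_of_sq_eq hL.ne' (by ring)]
  · rwa [linearGain_eq_zero_of_sq_eq hL.ne' (by ring)]
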